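/- Let f : Z_k^n → Z_k depend essentially on all n variables and let g be a subfunction of f with ess(g) = m ≤ n. Then there exist subfunctions g_1, ..., g_{n-m} of f with g ≺ g_1 ≺ g_2 ≺ ... ≺ g_{n-m} = f and ess(g_i) = m + i for each i = 1, ..., n-m. -/

import Mathlib

open scoped Classical

namespace Paper

/-- A `k`-valued function of `n` variables. -/
abbrev Fn (k n : ℕ) : Type := (Fin n → ZMod k) → ZMod k

/-- `x i` is an essential variable of `f`. -/
def Essential {k n : ℕ} (f : Fn k n) (i : Fin n) : Prop :=
  ∃ (a : Fin n → ZMod k) (b : ZMod k), f (Function.update a i b) ≠ f a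

/-- The set of essential variables of `f`. -/
def Ess {k n : ℕ} (f : Fn k n) : Set (Fin n) := {i | Essential f i}

/-- The subfunction `f(x i = c)`. -/
def substVar {k n : ℕ} (f : Fn k n) (i : Fin n) (c : ZMod k) : Fn k n :=
  fun a => f (Function.update a i c)

/-- Substitute the constants `c` for all variables in the set `J`. -/
noncomputable def substSet {k n : ℕ} (f : Fn k n) (J : Set (Fin n)) (c : Fin n → ZMod k) : Fn k n :=
  fun a => f (fun i => if i ∈ J then c i else a i)

/-- `g` is a simple subfunction of `f`: obtained by substituting a constant
for an essential variable of `f`. -/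
def SimpleSub {k n : ℕ} (g f : Fn k n) : Prop :=
  ∃ i ∈ Ess f, ∃ c : ZMod k, g = substVar f i c

/-- `Sub f` is the set of all subfunctions of `f` (reflexive-transitive closure of
the simple subfunction relation). -/
def Sub {k n : ℕ} (f : Fn k n) : Set (Fn k n) :=
  {g | Relation.ReflTransGen (fun u v => SimpleSub v u) f g}

/-- `M` is a separable set of variables in `f`: `M = Ess g` for some subfunction `g`. -/
def Separable {k n : ℕ} (f : Fn k n) (M : Set (Fin n)) : Prop :=
  ∃ g ∈ Sub f, Ess g = M

/-- Separability phrased via simultaneous substitution for a set of variables. -/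
def SeparableS {k n : ℕ} (f : Fn k n) (M : Set (Fin n)) : Prop :=
  ∃ (J : Set (Fin n)) (c : Fin n → ZMod k), Ess (substSet f J c) = M

/-- `J` is a set of essential variables disjoint from `M` such that every assignment of
constants to `J` destroys some variable of `M`. -/
def Kills {k n : ℕ} (f : Fn k n) (M J : Set (Fin n)) : Prop :=
  J ⊆ Ess f ∧ J ∩ M = ∅ ∧ ∀ c : Fin n → ZMod k, ¬ M ⊆ Ess (substSet f J c)

/-- `Dis f M` : the family of all distributive sets of `M` in `f`
(inclusion-minimal sets `J` with `Kills f M J`). -/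
def Dis {k n : ℕ} (f : Fn k n) (M : Set (Fin n)) : Set (Set (Fin n)) :=
  {J | Kills f M J ∧ ∀ J' ⊆ J, Kills f M J' → J' = J}

/-- `β` is an s-system of the family `F`. -/
def IsSSystem {n : ℕ} (F : Set (Set (Fin n))) (β : Set (Fin n)) : Prop :=
  (∀ P ∈ F, (β ∩ P).Nonempty) ∧ ∀ x ∈ β, ∃ P ∈ F, P ∩ β = {x}

/-- `x i` is a strongly essential variable of `f`. -/
def StronglyEssential {k n : ℕ} (f : Fn k n) (i : Fin n) : Prop :=
  i ∈ Ess f ∧ ∃ c : ZMod k, Ess (substVar f i c) = Ess f \ {i}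

/-- The number of subfunctions of `f` having exactly `m` essential variables. -/
noncomputable def subCount {k n : ℕ} (f : Fn k n) (m : ℕ) : ℕ :=
  Set.ncard {g ∈ Sub f | (Ess g).ncard = m}

/-- `IsImp f l c` : the list `l` of (variable, constant) substitutions together with the
final value `c` is an implementation of `f`, i.e. a root-to-leaf path in a reduced
ordered decision diagram of `f`: each substituted variable is essential in the current
subfunction, and the final subfunction is the constant `c`. -/
inductive IsImp {k n : ℕ} : Fn k n → List (Fin n × ZMod k) → ZMod k → Prop
  | const (f : Fn k n) (c : ZMod k) : (∀ a, f a = c) → IsImp f [] c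
  | step (f : Fn k n) (i : Fin n) (a : ZMod k) (l : List (Fin n × ZMod k)) (c : ZMod k) :
      i ∈ Ess f → IsImp (substVar f i a) l c → IsImp f ((i, a) :: l) c

/-- The number of implementations of `f`. -/
noncomputable def imp {k n : ℕ} (f : Fn k n) : ℕ :=
  Set.ncard {p : List (Fin n × ZMod k) × ZMod k | IsImp f p.1 p.2}

end Paper

/-!
Suppose `g ⪯ f(x_i = c)` and `f(x_i = c)` has lost, besides `x_i`, a further essential variable
`x_j` of `f`. Then `f(x_j = d)(x_i = c) = f(x_i = c)` for every `d`, and `d` can be chosen to keep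
`x_i` essential in `f(x_j = d)`; so `g ⪯ f(x_i = c) ≺ f(x_j = d) ≺ f`, and `f(x_j = d)` has
strictly more essential variables than `f(x_i = c)`. Iterating yields a simple subfunction of `f`
above `g` with exactly one essential variable fewer than `f`, and induction on `ess f - ess g`
builds the chain.
-/

namespace Paper

variable {k n : ℕ}

theorem notMem_ess_iff {f : Fn k n} {i : Fin n} :
    i ∉ Ess f ↔ ∀ a b, f (Function.update a i b) = f a := by
  simp [Ess, Essential]

theorem ess_substVar_subset (f : Fn k n) (i : Fin n) (c : ZMod k) :
    Ess (substVar f i c) ⊆ Ess f \ {i} := by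
  rintro j ⟨a, b, hab⟩
  by_cases hji : j = i
  · subst hji
    simp [substVar] at hab
  · refine ⟨⟨Function.update a i c, b, ?_⟩, hji⟩
    simpa [substVar, Function.update_comm hji] using hab

theorem exists_mem_ess_substVar {f : Fn k n} {i j : Fin n} (hij : i ≠ j) (hi : i ∈ Ess f) :
    ∃ d, i ∈ Ess (substVar f j d) := by
  obtain ⟨a, b, hab⟩ := hi
  refine ⟨a j, a, b, ?_⟩
  have hkeep : Function.update (Function.update a i b) j (a j) = Function.update a i b :=
    Function.update_eq_self_iff.2 (Function.update_of_ne hij.symm b a).symm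
  simpa [substVar, hkeep] using hab

theorem substVar_substVar_of_notMem_ess {f : Fn k n} {i j : Fin n} (hij : i ≠ j) {c : ZMod k}
    (hj : j ∉ Ess (substVar f i c)) (d : ZMod k) :
    substVar (substVar f j d) i c = substVar f i c := by
  funext a
  simpa [substVar, Function.update_comm hij] using notMem_ess_iff.1 hj a d

theorem SimpleSub.ncard_ess_lt {g f : Fn k n} (h : SimpleSub g f) :
    (Ess g).ncard < (Ess f).ncard := by
  obtain ⟨i, hi, c, rfl⟩ := h
  exact Set.ncard_lt_ncard ((ess_substVar_subset f i c).trans_ssubset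
    (Set.sdiff_singleton_ssubset.mpr hi)) (Set.toFinite _)

theorem ess_subset_of_mem_sub {g f : Fn k n} (h : g ∈ Sub f) : Ess g ⊆ Ess f := by
  induction h with
  | refl => exact subset_rfl
  | tail _ hstep ih =>
    obtain ⟨i, -, c, rfl⟩ := hstep
    exact (ess_substVar_subset _ i c).trans Set.sdiff_subset |>.trans ih

theorem ncard_ess_le_of_mem_sub {g f : Fn k n} (h : g ∈ Sub f) :
    (Ess g).ncard ≤ (Ess f).ncard :=
  Set.ncard_le_ncard (ess_subset_of_mem_sub h) (Set.toFinite _)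

theorem exists_simpleSub_ncard_ess_succ {f h₁ g : Fn k n} (hs : SimpleSub h₁ f)
    (hg : g ∈ Sub h₁) :
    ∃ h, SimpleSub h f ∧ (Ess h).ncard + 1 = (Ess f).ncard ∧ g ∈ Sub h := by
  obtain ⟨i, hi, c, rfl⟩ := hs
  by_cases htop : (Ess (substVar f i c)).ncard + 1 = (Ess f).ncard
  · exact ⟨_, ⟨i, hi, c, rfl⟩, htop, hg⟩
  have hgap : (insert i (Ess (substVar f i c))).ncard < (Ess f).ncard := by
    have := SimpleSub.ncard_ess_lt ⟨i, hi, c, rfl⟩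
    exact (Set.ncard_insert_le _ _).trans_lt (by omega)
  obtain ⟨j, hj, hjic⟩ := Set.exists_mem_notMem_of_ncard_lt_ncard hgap
  obtain ⟨hji, hjc⟩ : j ≠ i ∧ j ∉ Ess (substVar f i c) := by simpa using hjic
  obtain ⟨d, hid⟩ := exists_mem_ess_substVar hji.symm hi
  have hjd : SimpleSub (substVar f j d) f := ⟨j, hj, d, rfl⟩
  have hic : SimpleSub (substVar f i c) (substVar f j d) :=
    ⟨i, hid, c, (substVar_substVar_of_notMem_ess hji.symm hjc d).symm⟩
  have := hjd.ncard_ess_lt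
  have := hic.ncard_ess_lt
  exact exists_simpleSub_ncard_ess_succ hjd (Relation.ReflTransGen.head hic hg)
termination_by (Ess f).ncard - (Ess h₁).ncard

theorem exists_chain_of_mem_sub {f g : Fn k n} (hg : g ∈ Sub f) :
    ∃ h : ℕ → Fn k n, h 0 = g ∧ h ((Ess f).ncard - (Ess g).ncard) = f ∧
      (∀ i < (Ess f).ncard - (Ess g).ncard, SimpleSub (h i) (h (i + 1))) ∧
      ∀ i ≤ (Ess f).ncard - (Ess g).ncard, (Ess (h i)).ncard = (Ess g).ncard + i := by
  obtain ⟨T, hT⟩ := Nat.exists_eq_add_of_le (ncard_ess_le_of_mem_sub hg)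
  rw [hT, Nat.add_sub_cancel_left]
  induction T generalizing f with
  | zero =>
    rcases hg.cases_head with rfl | ⟨h₁, hs, hg₁⟩
    · exact ⟨fun _ => f, rfl, rfl, by simp, by simp⟩
    · have := hs.ncard_ess_lt
      have := ncard_ess_le_of_mem_sub hg₁
      omega
  | succ T ih =>
    rcases hg.cases_head with rfl | ⟨h₁, hs, hg₁⟩
    · omega
    obtain ⟨h, hh, hcard, hgh⟩ := exists_simpleSub_ncard_ess_succ hs hg₁
    obtain ⟨c, hc₀, hcT, hcstep, hccard⟩ := ih hgh (by omega)
    refine ⟨Function.update c (T + 1) f, by simpa using hc₀, by simp, ?_, ?_⟩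
    · intro i hi
      rcases Nat.lt_succ_iff_lt_or_eq.1 hi with hi | rfl
      · rw [Function.update_of_ne (by omega), Function.update_of_ne (by omega)]
        exact hcstep i hi
      · simpa [hcT] using hh
    · intro i hi
      rcases Nat.le_succ_iff.1 hi with hi | rfl
      · rw [Function.update_of_ne (by omega)]
        exact hccard i hi
      · simp only [Function.update_self]
        omega

end Paper

open Paper in
theorem chain_of_subfunctions_general {k n : ℕ} (f g : Fn k n)
    (hfull : Ess f = Set.univ) (hg : g ∈ Sub f) (m : ℕ)
    (hm : (Ess g).ncard = m) :
    ∃ h : ℕ → Fn k n, h 0 = g ∧ h (n - m) = f ∧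
      (∀ i < n - m, SimpleSub (h i) (h (i + 1))) ∧
      (∀ i ≤ n - m, (Ess (h i)).ncard = m + i) := by
  have hn : (Ess f).ncard = n := by simp [hfull]
  simpa [hn, hm] using exists_chain_of_mem_sub hg

open Paper in
/-- if `f` depends essentially on all `n` variables and `g ⪯ f` has `m ≤ n`
essential variables, then there is a chain `g ≺ g₁ ≺ ⋯ ≺ g_{n-m} = f` of simple
subfunctions with `ess (g_i) = m + i`. -/
theorem chain_of_subfunctions {k n : ℕ} (hk : 2 ≤ k) (f g : Fn k n)
    (hfull : Ess f = Set.univ) (hg : g ∈ Sub f) (m : ℕ)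
    (hm : (Ess g).ncard = m) (hle : m ≤ n) :
    ∃ h : ℕ → Fn k n, h 0 = g ∧ h (n - m) = f ∧
      (∀ i < n - m, SimpleSub (h i) (h (i + 1))) ∧
      (∀ i ≤ n - m, (Ess (h i)).ncard = m + i) :=
  chain_of_subfunctions_general f g hfull hg m hm
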